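/- For a Schröder tree t, c_t(q) = θ(sk(t)): the coefficient ∏_{v internal of t} 1/(q^{φ(v)-1}-1) equals ∏_{w vertex of sk(t)} 1/(q^{|sk(t)_w|}-1), where sk is the skeleton map and |·| sums decorations. -/

import Mathlib

noncomputable section

/-- Reduced plane (Schröder) trees: every internal vertex has at least two children. -/
inductive STree where
  | leaf : STree
  | node (a b : STree) (l : List STree) : STree

/-- Rooted trees decorated by positive integers. -/
inductive DTree where
  | node (d : ℕ+) (ch : List DTree) : DTree

mutual
  /-- Number of leaves of a Schröder tree. -/
  def leavesT : STree → ℕ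
    | .leaf => 1
    | .node a b l => leavesT a + leavesT b + leavesL l
  def leavesL : List STree → ℕ
    | [] => 0
    | t :: ts => leavesT t + leavesL ts
end

mutual
  /-- `c_t(q) = ∏_{v internal vertex of t} 1/(q^{φ(v)-1} - 1)`, with `φ(v)` the number of
  leaves below `v`. -/
  def cProd : STree → RatFunc ℚ
    | .leaf => 1
    | .node a b l =>
        ((RatFunc.X : RatFunc ℚ) ^ (leavesT (.node a b l) - 1) - 1)⁻¹ *
          (cProd a * cProd b * cProdL l)
  def cProdL : List STree → RatFunc ℚ
    | [] => 1
    | t :: ts => cProd t * cProdL ts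
end

mutual
  /-- The skeleton map: delete the leaves and decorate each internal vertex of arity `k`
  by `k - 1` (`sk(leaf)` is the empty forest). -/
  def skT : STree → List DTree
    | .leaf => []
    | .node a b l =>
        [DTree.node ⟨1 + l.length, by omega⟩ (skT a ++ skT b ++ skL l)]
  def skL : List STree → List DTree
    | [] => []
    | t :: ts => skT t ++ skL ts
end

mutual
  /-- `|T|`: the sum of the decorations of `T`. -/
  def wtT : DTree → ℕ
    | .node d ch => (d : ℕ) + wtL ch
  def wtL : List DTree → ℕ
    | [] => 0
    | t :: ts => wtT t + wtL ts
end

mutual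
  /-- `θ(T) = ∏_{v ∈ T} 1/(q^{|T_v|} - 1)`. -/
  def thetaProd : DTree → RatFunc ℚ
    | .node d ch =>
        ((RatFunc.X : RatFunc ℚ) ^ (wtT (.node d ch)) - 1)⁻¹ * thetaProdL ch
  def thetaProdL : List DTree → RatFunc ℚ
    | [] => 1
    | t :: ts => thetaProd t * thetaProdL ts
end

/-! Both sides are products of one factor per internal vertex of `t`, since `sk` maps the
internal vertices of `t` bijectively onto the vertices of `sk(t)`. The factors agree because a
Schröder tree with `n` leaves has internal arities `kᵢ` with `∑ (kᵢ - 1) = n - 1`, so the weight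
`|sk(t)_w|` of the image of `v` is `φ(v) - 1`. -/

theorem wtL_append (a b : List DTree) : wtL (a ++ b) = wtL a + wtL b := by
  induction a with
  | nil => simp only [List.nil_append, wtL, zero_add]
  | cons t ts ih => simp only [List.cons_append, wtL, ih, add_assoc]

theorem thetaProdL_append (a b : List DTree) :
    thetaProdL (a ++ b) = thetaProdL a * thetaProdL b := by
  induction a with
  | nil => simp only [List.nil_append, thetaProdL, one_mul]
  | cons t ts ih => simp only [List.cons_append, thetaProdL, ih, mul_assoc]

mutual
theorem wtL_skT_add_one (t : STree) : wtL (skT t) + 1 = leavesT t := by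
  cases t with
  | leaf => rfl
  | node a b l =>
      have ha := wtL_skT_add_one a
      have hb := wtL_skT_add_one b
      have hl := wtL_skL_add_length l
      simp only [skT, wtL, wtT, wtL_append, PNat.mk_coe, leavesT]
      omega

theorem wtL_skL_add_length (l : List STree) : wtL (skL l) + l.length = leavesL l := by
  cases l with
  | nil => rfl
  | cons t ts =>
      have ht := wtL_skT_add_one t
      have hts := wtL_skL_add_length ts
      simp only [skL, wtL_append, List.length_cons, leavesL]
      omega
end

mutual
theorem cProd_eq_thetaProdL_skT (t : STree) : cProd t = thetaProdL (skT t) := by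
  cases t with
  | leaf => rfl
  | node a b l =>
      have hroot : wtT (.node ⟨1 + l.length, by omega⟩ (skT a ++ skT b ++ skL l)) =
          leavesT (.node a b l) - 1 := by
        have := wtL_skT_add_one (.node a b l)
        simp only [skT, wtL, add_zero] at this
        omega
      simp only [cProd, skT, thetaProdL, thetaProd, mul_one]
      rw [hroot, thetaProdL_append, thetaProdL_append, cProd_eq_thetaProdL_skT a,
        cProd_eq_thetaProdL_skT b, cProdL_eq_thetaProdL_skL l]

theorem cProdL_eq_thetaProdL_skL (l : List STree) : cProdL l = thetaProdL (skL l) := by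
  cases l with
  | nil => rfl
  | cons t ts =>
      rw [cProdL, skL, thetaProdL_append, cProd_eq_thetaProdL_skT t,
        cProdL_eq_thetaProdL_skL ts]
end

/-- **`c_t(q) = θ(sk(t))`.** For every Schröder tree `t`, the coefficient
`∏_{v internal vertex of t} 1/(q^{φ(v)-1} - 1)` equals the value of Ecalle's character
`∏_{w vertex of sk(t)} 1/(q^{|sk(t)_w|} - 1)` on the skeleton forest of `t`. -/
theorem c_eq_theta_of_skeleton (t : STree) :
    cProd t = thetaProdL (skT t) :=
  cProd_eq_thetaProdL_skT t
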